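/- arXiv:math/0001166 — 5 statements merged into one kernel-verified Lean document; each statement's English description precedes it below -/
import Mathlib

section
/- There exists a unique element E ∈ g such that ⁅E, X⁆ = i • X for every i ∈ ℤ and every X ∈ g_i; moreover, this element E lies in g_0. (This is the grading element of the |k|-graded semisimple Lie algebra g.) -/
/-! The grading is the eigenspace decomposition of the degree derivation `D`, acting as `i` on
`g i`. In a Lie algebra with nondegenerate Killing form every derivation is inner, so `D = ad E`;
`E` is unique because `ad` is injective, and `E ∈ g 0` because `D E = ⁅E, E⁆ = 0`. -/

open DirectSum

lemma LieAlgebra.isKilling_of_killingForm_nondegenerate {R L : Type*} [CommRing R] [LieRing L]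
    [LieAlgebra R L] (h : (killingForm R L).Nondegenerate) : IsKilling R L := by
  refine ⟨(LieSubmodule.eq_bot_iff _).mpr fun x hx => h.1 x fun y => ?_⟩
  rw [LieModule.traceForm_comm]
  exact (LieIdeal.mem_killingCompl R L ⊤).mp hx y (LieSubmodule.mem_top y)

noncomputable abbrev GradedLieAlgebra.ofIsInternal {ι R L : Type*} [DecidableEq ι]
    [AddCommMonoid ι] [CommRing R] [LieRing L] [LieAlgebra R L] {ℒ : ι → Submodule R L}
    (h : IsInternal ℒ) (hbr : ∀ i j, ∀ x ∈ ℒ i, ∀ y ∈ ℒ j, ⁅x, y⁆ ∈ ℒ (i + j)) :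
    GradedLieAlgebra ℒ where
  bracket_mem {_ _ _ _} hx hy := hbr _ _ _ hx _ hy
  __ := h.chooseDecomposition

lemma LieModule.eq_of_lie_eq_of_decomposition {ι R L M : Type*} [DecidableEq ι] [CommRing R]
    [LieRing L] [LieAlgebra R L] [AddCommGroup M] [Module R M] [LieRingModule L M]
    [LieModule R L M] [IsFaithful R L M] (ℳ : ι → Submodule R M) [Decomposition ℳ] {E E' : L}
    (h : ∀ i, ∀ m ∈ ℳ i, ⁅E, m⁆ = ⁅E', m⁆) : E = E' := by
  refine IsFaithful.injective_toEnd (R := R) (M := M) (LinearMap.ext fun m => ?_)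
  induction m using Decomposition.inductionOn ℳ with
  | zero => simp
  | homogeneous m => exact h _ _ m.2
  | add m m' hm hm' => rw [map_add, map_add, hm, hm']

namespace LieDerivation

variable {ι R L : Type*} [DecidableEq ι] [AddCommMonoid ι] [CommRing R] [LieRing L]
  [LieAlgebra R L] (ℒ : ι → Submodule R L) [GradedLieAlgebra ℒ]

lemma coe_decompose_ofGrading (φ : ι →+ R) (x : L) (j : ι) :
    (decompose ℒ (ofGrading ℒ φ x) j : L) = φ j • (decompose ℒ x j : L) := by
  induction x using Decomposition.inductionOn ℒ with
  | zero => simp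
  | @homogeneous i x =>
    have hφx : φ i • (x : L) ∈ ℒ i := Submodule.smul_mem _ _ x.2
    rw [ofGrading_apply_apply ℒ φ x.2]
    rcases eq_or_ne i j with rfl | hij
    · rw [decompose_of_mem_same ℒ hφx, decompose_of_mem_same ℒ x.2]
    · rw [decompose_of_mem_ne ℒ hφx hij, decompose_of_mem_ne ℒ x.2 hij, smul_zero]
  | add x y hx hy => simp [decompose_add, hx, hy, smul_add]

lemma mem_of_ofGrading_eq_zero [IsDomain R] [Module.IsTorsionFree R L] {φ : ι →+ R} {i : ι}
    (hφ : ∀ j ≠ i, φ j ≠ 0) {x : L} (hx : ofGrading ℒ φ x = 0) : x ∈ ℒ i := by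
  classical
  have hcomp : ∀ j ≠ i, (decompose ℒ x j : L) = 0 := fun j hj =>
    (smul_eq_zero.mp (by simpa [hx] using (coe_decompose_ofGrading ℒ φ x j).symm)).resolve_left
      (hφ j hj)
  rw [← sum_support_decompose ℒ x, Finset.sum_eq_single i (fun j _ hj => hcomp j hj) (by simp)]
  exact (decompose ℒ x i).2

end LieDerivation

theorem grading_element_exists_unique_general
    {𝕂 : Type*} [Field 𝕂] [CharZero 𝕂]
    {L : Type*} [LieRing L] [LieAlgebra 𝕂 L] [Module.Finite 𝕂 L]
    (hκ : (killingForm 𝕂 L).Nondegenerate)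
    (g : ℤ → Submodule 𝕂 L)
    (hint : DirectSum.IsInternal g)
    (hbr : ∀ i j : ℤ, ∀ x ∈ g i, ∀ y ∈ g j, ⁅x, y⁆ ∈ g (i + j)) :
    ∃ E : L, E ∈ g 0 ∧ (∀ (i : ℤ) (X : L), X ∈ g i → ⁅E, X⁆ = i • X) ∧
      ∀ E' : L, (∀ (i : ℤ) (X : L), X ∈ g i → ⁅E', X⁆ = i • X) → E' = E := by
  have : LieAlgebra.IsKilling 𝕂 L := LieAlgebra.isKilling_of_killingForm_nondegenerate hκ
  let _ : GradedLieAlgebra g := GradedLieAlgebra.ofIsInternal hint hbr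
  obtain ⟨E, hE⟩ :=
    LieDerivation.IsKilling.exists_eq_ad (LieDerivation.ofGrading g (Int.castAddHom 𝕂))
  have hE_lie : ∀ (i : ℤ) (X : L), X ∈ g i → ⁅E, X⁆ = i • X := fun i X hX => by
    simpa [← hE, Int.cast_smul_eq_zsmul] using
      LieDerivation.ofGrading_apply_apply g (Int.castAddHom 𝕂) hX
  have hE_mem : E ∈ g 0 := LieDerivation.mem_of_ofGrading_eq_zero g (φ := Int.castAddHom 𝕂)
    (fun j hj => by simpa using hj) (by simp [← hE])
  refine ⟨E, hE_mem, hE_lie, fun E' hE' => ?_⟩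
  exact LieModule.eq_of_lie_eq_of_decomposition (R := 𝕂) g fun i X hX => by
    rw [hE' i X hX, hE_lie i X hX]

/-- There exists a unique element `E` such that `⁅E, X⁆ = i • X` for every `i` and every
`X ∈ g i`; moreover this grading element lies in `g 0`. -/
theorem grading_element_exists_unique
    {𝕂 : Type*} [Field 𝕂] [CharZero 𝕂]
    {L : Type*} [LieRing L] [LieAlgebra 𝕂 L] [Module.Finite 𝕂 L]
    (hκ : (killingForm 𝕂 L).Nondegenerate)
    (k : ℕ) (hk : 1 ≤ k)
    (g : ℤ → Submodule 𝕂 L)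
    (hbd : ∀ i : ℤ, (k : ℤ) < |i| → g i = ⊥)
    (hint : DirectSum.IsInternal g)
    (hbr : ∀ i j : ℤ, ∀ x ∈ g i, ∀ y ∈ g j, ⁅x, y⁆ ∈ g (i + j)) :
    ∃ E : L, E ∈ g 0 ∧ (∀ (i : ℤ) (X : L), X ∈ g i → ⁅E, X⁆ = i • X) ∧
      ∀ E' : L, (∀ (i : ℤ) (X : L), X ∈ g i → ⁅E', X⁆ = i • X) → E' = E :=
  grading_element_exists_unique_general hκ g hint hbr
end

section
/- The Lie subalgebra g_0 decomposes as the internal direct sum of its center z(g_0) = {A ∈ g_0 : ⁅A, B⁆ = 0 for all B ∈ g_0} and its derived subalgebra ⁅g_0, g_0⁆ (i.e. z(g_0) ∩ ⁅g_0, g_0⁆ = 0 and z(g_0) + ⁅g_0, g_0⁆ = g_0), and these two subspaces are orthogonal with respect to the Killing form of g: κ(Z, C) = 0 for all Z ∈ z(g_0) and C ∈ ⁅g_0, g_0⁆. -/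
/-!
The Killing form pairs `g i` and `g j` trivially unless `i + j = 0`, so its restriction `B` to
`g 0` is a nondegenerate invariant form. If `z` is central in `g 0` and lies in `⁅g 0, g 0⁆`,
then each generalized eigenspace `V_μ` of `ad z` is a `g 0`-submodule on which `z` still acts as a
sum of commutators, so `μ • dim V_μ = tr (ad z|V_μ) = 0`. After extending scalars to an algebraic
closure this makes `ad z` nilpotent, so `B z · = 0` and `z = 0`. By invariance, the
`B`-orthogonal of `⁅g 0, g 0⁆` is central, and it is a complement of `⁅g 0, g 0⁆`; so the center
is one too.
-/

open Module LinearMap TensorProduct LieModule LieAlgebra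

namespace Module.End

variable {K V : Type*} [Field K] [AddCommGroup V] [Module K V] [FiniteDimensional K V]

lemma trace_restrict_maxGenEigenspace (f : End K V) (μ : K) :
    trace K _ (f.restrict (f.mapsTo_maxGenEigenspace_of_comm (Commute.refl f) μ)) =
      μ * finrank K (f.maxGenEigenspace μ) := by
  have hnil := f.isNilpotent_restrict_maxGenEigenspace_sub_algebraMap μ
  rw [← LinearMap.restrict_sub (f.mapsTo_maxGenEigenspace_of_comm (Commute.refl f) μ)
    (fun _ hx ↦ Submodule.smul_mem _ μ hx)] at hnil
  have := trace_comp_eq_mul_of_commute_of_isNilpotent μ (Commute.one_left _) hnil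
  rwa [← mul_eq_comp, one_mul, trace_one] at this

lemma isNilpotent_of_trace_restrict_maxGenEigenspace_eq_zero [CharZero K] [IsAlgClosed K]
    (f : End K V)
    (h : ∀ μ, trace K _ (f.restrict (f.mapsTo_maxGenEigenspace_of_comm (Commute.refl f) μ)) = 0) :
    IsNilpotent f := by
  have hbot : ∀ μ ≠ 0, f.maxGenEigenspace μ = ⊥ := fun μ hμ ↦ by
    simpa [trace_restrict_maxGenEigenspace, hμ] using h μ
  have htop : f.maxGenEigenspace 0 = ⊤ := by
    rw [eq_top_iff, ← iSup_maxGenEigenspace_eq_top f, iSup_le_iff]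
    intro μ
    rcases eq_or_ne μ 0 with rfl | hμ
    · exact le_rfl
    · simp [hbot μ hμ]
  refine ((charpoly_nilpotent_tfae f).out 0 2).mpr fun m ↦ ?_
  obtain ⟨k, hk⟩ := (mem_maxGenEigenspace f 0 m).mp (htop ▸ Submodule.mem_top)
  exact ⟨k, by simpa using hk⟩

end Module.End

namespace LieModule

variable {K L M : Type*} [Field K] [LieRing L] [LieAlgebra K L]
  [AddCommGroup M] [Module K M] [LieRingModule L M] [LieModule K L M]

def maxGenEigenspaceOfMemCenter {z : L} (hz : z ∈ center K L) (μ : K) :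
    LieSubmodule K L M where
  toSubmodule := (toEnd K L M z).maxGenEigenspace μ
  lie_mem {x _} hm :=
    Module.End.mapsTo_maxGenEigenspace_of_comm (commute_toEnd_of_mem_center_left M hz x) μ hm

variable [FiniteDimensional K M] [CharZero K]

lemma isNilpotent_toEnd_of_mem_lcs_of_mem_center_of_isAlgClosed [IsAlgClosed K] {z : L}
    (hz : z ∈ lowerCentralSeries K L L 1) (hzc : z ∈ center K L) :
    _root_.IsNilpotent (toEnd K L M z) :=
  Module.End.isNilpotent_of_trace_restrict_maxGenEigenspace_eq_zero _ fun μ ↦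
    trace_toEnd_eq_zero_of_mem_lcs K L (maxGenEigenspaceOfMemCenter (M := M) hzc μ) le_rfl hz

lemma isNilpotent_toEnd_of_mem_lcs_of_mem_center {z : L}
    (hz : z ∈ lowerCentralSeries K L L 1) (hzc : z ∈ center K L) :
    _root_.IsNilpotent (toEnd K L M z) := by
  let A := AlgebraicClosure K
  replace hz : 1 ⊗ₜ z ∈ lowerCentralSeries A (A ⊗[K] L) (A ⊗[K] L) 1 := by
    simp only [lowerCentralSeries_succ, lowerCentralSeries_zero] at hz ⊢
    rw [← LieSubmodule.baseChange_top, ← LieSubmodule.lie_baseChange]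
    exact Submodule.tmul_mem_baseChange_of_mem 1 hz
  replace hzc : 1 ⊗ₜ[K] z ∈ center A (A ⊗[K] L) := by
    simp only [mem_maxTrivSubmodule] at hzc ⊢
    intro y
    exact y.induction_on rfl (fun a u ↦ by simp [hzc u]) (fun u v hu hv ↦ by simp [hu, hv])
  have := isNilpotent_toEnd_of_mem_lcs_of_mem_center_of_isAlgClosed (M := A ⊗[K] M) hz hzc
  rw [toEnd_baseChange] at this
  exact (IsNilpotent.map_iff (f := End.baseChangeHom K A M) (baseChangeHom_injective K M A)).mp
    this

variable (K L M) in
lemma lowerCentralSeries_one_inf_center_le_ker_traceForm_of_charZero :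
    lowerCentralSeries K L L 1 ⊓ center K L ≤ LinearMap.ker (traceForm K L M) := by
  rintro z ⟨hz : z ∈ lowerCentralSeries K L L 1, hzc : z ∈ center K L⟩
  ext x
  have hnil : _root_.IsNilpotent (toEnd K L M z - algebraMap K _ 0) := by
    simpa using isNilpotent_toEnd_of_mem_lcs_of_mem_center (M := M) hz hzc
  rw [LinearMap.zero_apply, traceForm_comm, traceForm_apply_apply,
    trace_comp_eq_mul_of_commute_of_isNilpotent 0 (commute_toEnd_of_mem_center_right M hzc x) hnil,
    zero_mul]

end LieModule

namespace LieAlgebra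

variable {K L M : Type*} [Field K] [CharZero K] [LieRing L] [LieAlgebra K L] [FiniteDimensional K L]
  [AddCommGroup M] [Module K M] [LieRingModule L M] [LieModule K L M] [FiniteDimensional K M]

lemma isCompl_center_lowerCentralSeries_one (h : LinearMap.ker (traceForm K L M) = ⊥) :
    IsCompl (center K L : Submodule K L) (lowerCentralSeries K L L 1 : Submodule K L) := by
  set B := traceForm K L M
  set Z : Submodule K L := (center K L : Submodule K L)
  set W : Submodule K L := lowerCentralSeries K L L 1
  have hdisj : Disjoint Z W := by
    rw [disjoint_iff, ← le_bot_iff, ← h, inf_comm]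
    exact lowerCentralSeries_one_inf_center_le_ker_traceForm_of_charZero K L M
  have horth : B.orthogonal W ≤ Z := fun z hz ↦ by
    rw [LinearMap.BilinForm.mem_orthogonal_iff] at hz
    refine (mem_maxTrivSubmodule K L L z).mpr fun a ↦ ?_
    refine LinearMap.ker_eq_bot'.mp h _ (LinearMap.ext fun y ↦ ?_)
    have hay : ⁅a, y⁆ ∈ lowerCentralSeries K L L 1 := by
      rw [lowerCentralSeries_succ, lowerCentralSeries_zero]
      exact LieSubmodule.lie_mem_lie (LieSubmodule.mem_top a) (LieSubmodule.mem_top y)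
    rw [← lie_skew, map_neg, LinearMap.neg_apply, traceForm_apply_lie_apply, traceForm_comm,
      hz _ hay, neg_zero, LinearMap.zero_apply]
  have hcompl : IsCompl W (B.orthogonal W) :=
    (LinearMap.BilinForm.isCompl_orthogonal_iff_disjoint (traceForm_isSymm K L M).isRefl).mpr
      (hdisj.symm.mono_right horth)
  refine ⟨hdisj, codisjoint_iff.mpr (eq_top_iff.mpr ?_)⟩
  calc ⊤ = W ⊔ B.orthogonal W := hcompl.sup_eq_top.symm
    _ ≤ Z ⊔ W := sup_le le_sup_right (horth.trans le_sup_left)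

end LieAlgebra

namespace LieSubalgebra

variable {K L : Type*} [Field K] [LieRing L] [LieAlgebra K L] (H : LieSubalgebra K L)

lemma mk_mem_center_iff {x : L} (hx : x ∈ H) :
    (⟨x, hx⟩ : H) ∈ center K H ↔ ∀ y ∈ H, ⁅x, y⁆ = 0 := by
  simp only [mem_maxTrivSubmodule, Subtype.forall, ← lie_skew (x := x), neg_eq_zero]
  simp [Subtype.ext_iff]

lemma span_lie_le : Submodule.span K {x : L | ∃ a ∈ H, ∃ b ∈ H, ⁅a, b⁆ = x} ≤ H.toSubmodule :=
  Submodule.span_le.mpr fun _ ⟨_, ha, _, hb, hx⟩ ↦ hx ▸ H.lie_mem ha hb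

lemma mem_lowerCentralSeries_one_iff (x : H) :
    x ∈ lowerCentralSeries K H H 1 ↔
      (x : L) ∈ Submodule.span K {x : L | ∃ a ∈ H, ∃ b ∈ H, ⁅a, b⁆ = x} := by
  have himage : {x : L | ∃ a ∈ H, ∃ b ∈ H, ⁅a, b⁆ = x} =
      H.toSubmodule.subtype '' {m : H | ∃ u v : H, ⁅u, v⁆ = m} := by
    ext m
    constructor
    · rintro ⟨a, ha, b, hb, rfl⟩
      exact ⟨⁅⟨a, ha⟩, ⟨b, hb⟩⁆, ⟨_, _, rfl⟩, rfl⟩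
    · rintro ⟨-, ⟨u, v, rfl⟩, rfl⟩
      exact ⟨u, u.2, v, v.2, rfl⟩
  have hlcs : x ∈ lowerCentralSeries K H H 1 ↔
      x ∈ Submodule.span K {m : H | ∃ u v : H, ⁅u, v⁆ = m} :=
    SetLike.ext_iff.mp (coe_derivedSeries_one_eq K H) x
  rw [hlcs, himage, ← Submodule.map_span]
  exact ⟨Submodule.mem_map_of_mem, fun ⟨y, hy, hyx⟩ ↦ Subtype.ext hyx ▸ hy⟩

end LieSubalgebra

section Grading

variable {K L : Type*} [Field K] [LieRing L] [LieAlgebra K L] [Module.Finite K L]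
  {g : ℤ → Submodule K L}

lemma killingForm_eq_zero_of_mem_of_add_ne_zero (hint : DirectSum.IsInternal g)
    (hbr : ∀ i j : ℤ, ∀ x ∈ g i, ∀ y ∈ g j, ⁅x, y⁆ ∈ g (i + j)) {i j : ℤ} (hij : i + j ≠ 0)
    {x y : L} (hx : x ∈ g i) (hy : y ∈ g j) : killingForm K L x y = 0 := by
  rw [killingForm_apply_apply]
  refine trace_eq_zero_of_mapsTo_ne hint (fun m ↦ i + (j + m)) (fun m ↦ by omega)
    fun m z hz ↦ ?_
  simpa using hbr i (j + m) x hx _ (hbr j m y hy z hz)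

lemma eq_zero_of_mem_zero_of_killingForm_eq_zero (hint : DirectSum.IsInternal g)
    (hbr : ∀ i j : ℤ, ∀ x ∈ g i, ∀ y ∈ g j, ⁅x, y⁆ ∈ g (i + j))
    (hκ : (killingForm K L).Nondegenerate) {x : L} (hx : x ∈ g 0)
    (h : ∀ y ∈ g 0, killingForm K L x y = 0) : x = 0 := by
  refine hκ.1 x fun y ↦ ?_
  have hy : y ∈ ⨆ i, g i := hint.submodule_iSup_eq_top ▸ Submodule.mem_top
  induction hy using Submodule.iSup_induction' with
  | mem i y hy =>
    rcases eq_or_ne i 0 with rfl | hi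
    · exact h y hy
    · exact killingForm_eq_zero_of_mem_of_add_ne_zero hint hbr (by omega) hx hy
  | zero => simp
  | add y z _ _ hy hz => simp [hy, hz]

end Grading

theorem g0_center_oplus_derived_general
    {𝕂 : Type*} [Field 𝕂] [CharZero 𝕂]
    {L : Type*} [LieRing L] [LieAlgebra 𝕂 L] [Module.Finite 𝕂 L]
    (hκ : (killingForm 𝕂 L).Nondegenerate)
    (g : ℤ → Submodule 𝕂 L)
    (hint : DirectSum.IsInternal g)
    (hbr : ∀ i j : ℤ, ∀ x ∈ g i, ∀ y ∈ g j, ⁅x, y⁆ ∈ g (i + j)) :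
    (∀ A : L, A ∈ g 0 → (∀ B ∈ g 0, ⁅A, B⁆ = 0) →
        A ∈ Submodule.span 𝕂 {x : L | ∃ a ∈ g 0, ∃ b ∈ g 0, ⁅a, b⁆ = x} → A = 0) ∧
    (∀ A ∈ g 0, ∃ Z C : L, (Z ∈ g 0 ∧ ∀ B ∈ g 0, ⁅Z, B⁆ = 0) ∧
        C ∈ Submodule.span 𝕂 {x : L | ∃ a ∈ g 0, ∃ b ∈ g 0, ⁅a, b⁆ = x} ∧ A = Z + C) ∧
    (∀ Z : L, Z ∈ g 0 → (∀ B ∈ g 0, ⁅Z, B⁆ = 0) →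
        ∀ C ∈ Submodule.span 𝕂 {x : L | ∃ a ∈ g 0, ∃ b ∈ g 0, ⁅a, b⁆ = x},
          killingForm 𝕂 L Z C = 0) := by
  let H : LieSubalgebra 𝕂 L :=
    { g 0 with lie_mem' := fun hx hy ↦ by simpa using hbr 0 0 _ hx _ hy }
  have hker : ker (traceForm 𝕂 H L) = ⊥ := ker_eq_bot'.mpr fun x hx ↦ Subtype.ext <|
    eq_zero_of_mem_zero_of_killingForm_eq_zero hint hbr hκ x.2 fun y hy ↦
      LinearMap.congr_fun hx ⟨y, hy⟩
  have hcompl := isCompl_center_lowerCentralSeries_one hker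
  refine ⟨fun A hA hAc hAd ↦ ?_, fun A hA ↦ ?_, fun Z hZ hZc C hC ↦ ?_⟩
  · exact congrArg Subtype.val <| Submodule.disjoint_def.mp hcompl.disjoint ⟨A, hA⟩
      ((H.mk_mem_center_iff hA).mpr hAc) ((H.mem_lowerCentralSeries_one_iff _).mpr hAd)
  · obtain ⟨z, hz, c, hc, hzc⟩ := Submodule.mem_sup.mp
      (hcompl.sup_eq_top ▸ Submodule.mem_top : (⟨A, hA⟩ : H) ∈ _)
    exact ⟨z, c, ⟨z.2, (H.mk_mem_center_iff z.2).mp hz⟩, (H.mem_lowerCentralSeries_one_iff c).mp hc,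
      congrArg Subtype.val hzc.symm⟩
  · have hCH : C ∈ H := H.span_lie_le hC
    rw [traceForm_comm]
    exact traceForm_apply_eq_zero_of_mem_lcs_of_mem_center 𝕂 H L (x := ⟨C, hCH⟩) (y := ⟨Z, hZ⟩)
      ((H.mem_lowerCentralSeries_one_iff _).mpr hC) ((H.mk_mem_center_iff hZ).mpr hZc)

/-- `g 0` is the direct sum of its center and its derived subalgebra, and these two subspaces
are orthogonal with respect to the Killing form of `g`. -/
theorem g0_center_oplus_derived
    {𝕂 : Type*} [Field 𝕂] [CharZero 𝕂]
    {L : Type*} [LieRing L] [LieAlgebra 𝕂 L] [Module.Finite 𝕂 L]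
    (hκ : (killingForm 𝕂 L).Nondegenerate)
    (k : ℕ) (hk : 1 ≤ k)
    (g : ℤ → Submodule 𝕂 L)
    (hbd : ∀ i : ℤ, (k : ℤ) < |i| → g i = ⊥)
    (hint : DirectSum.IsInternal g)
    (hbr : ∀ i j : ℤ, ∀ x ∈ g i, ∀ y ∈ g j, ⁅x, y⁆ ∈ g (i + j)) :
    (∀ A : L, A ∈ g 0 → (∀ B ∈ g 0, ⁅A, B⁆ = 0) →
        A ∈ Submodule.span 𝕂 {x : L | ∃ a ∈ g 0, ∃ b ∈ g 0, ⁅a, b⁆ = x} → A = 0) ∧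
    (∀ A ∈ g 0, ∃ Z C : L, (Z ∈ g 0 ∧ ∀ B ∈ g 0, ⁅Z, B⁆ = 0) ∧
        C ∈ Submodule.span 𝕂 {x : L | ∃ a ∈ g 0, ∃ b ∈ g 0, ⁅a, b⁆ = x} ∧ A = Z + C) ∧
    (∀ Z : L, Z ∈ g 0 → (∀ B ∈ g 0, ⁅Z, B⁆ = 0) →
        ∀ C ∈ Submodule.span 𝕂 {x : L | ∃ a ∈ g 0, ∃ b ∈ g 0, ⁅a, b⁆ = x},
          killingForm 𝕂 L Z C = 0) :=
  g0_center_oplus_derived_general hκ g hint hbr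
end

section
/- The restriction of the Killing form κ of g to the center z(g_0) of g_0 is nondegenerate, and the restriction of κ to the derived subalgebra ⁅g_0, g_0⁆ of g_0 is nondegenerate: if Z ∈ z(g_0) satisfies κ(Z, Z') = 0 for all Z' ∈ z(g_0) then Z = 0, and if C ∈ ⁅g_0, g_0⁆ satisfies κ(C, C') = 0 for all C' ∈ ⁅g_0, g_0⁆ then C = 0. -/
/-!
Graded pieces `g i`, `g j` are Killing-orthogonal unless `i + j = 0`, so the Killing form stays
nondegenerate on `g 0`. For a nondegenerate invariant form on a Lie algebra the orthogonal of the
derived algebra is the centre and vice versa, so both claims amount to `z(g 0) ∩ ⁅g 0, g 0⁆ = 0`.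
An element `x` of this intersection acts nilpotently on `L`: on the Fitting component `W` where
`ad x` is invertible, `ad x` and its inverse `Y` commute with `g 0`, and since `x` is a sum of
commutators, `dim W = tr (ad x ∘ Y) = 0`. As `ad x` commutes with every `ad y`, `y ∈ g 0`,
the trace `κ(x, y)` of the nilpotent `ad x ∘ ad y` vanishes, whence `x = 0`.
-/

open LinearMap (trace)
open LieAlgebra

namespace LieModule

attribute [local instance 100] LieRing.ofAssociativeRing

variable {R L M : Type*} [CommRing R] [LieRing L] [LieAlgebra R L]
  [AddCommGroup M] [Module R M] [LieRingModule L M] [LieModule R L M]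

lemma trace_toEnd_mul_eq_zero_of_mem_derivedSeries {x : L} (hx : x ∈ derivedSeries R L 1)
    {f : Module.End R M} (hf : ∀ y : L, Commute (toEnd R L M y) f) :
    trace R M (toEnd R L M x * f) = 0 := by
  replace hx : x ∈ Submodule.span R {⁅u, v⁆ | (u : L) (v : L)} := by
    rwa [← coe_derivedSeries_one_eq]
  induction hx using Submodule.span_induction with
  | mem _ h =>
    obtain ⟨u, v, rfl⟩ := h
    rw [LieHom.map_lie, Ring.lie_def, sub_mul, map_sub, sub_eq_zero, mul_assoc, mul_assoc,
      (hf u).eq, ← mul_assoc (toEnd R L M v), LinearMap.trace_mul_comm R _ (toEnd R L M u)]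
  | zero => simp
  | add _ _ _ _ hu hv => simp [add_mul, hu, hv]
  | smul _ _ _ hu => simp [hu]

variable {K : Type*} [Field K] [CharZero K] [LieAlgebra K L] [Module K M] [LieModule K L M]
  [Module.Finite K M]

lemma isNilpotent_toEnd_of_mem_center_of_mem_derivedSeries {x : L}
    (hxc : x ∈ center K L) (hxd : x ∈ derivedSeries K L 1) :
    _root_.IsNilpotent (toEnd K L M x) := by
  set φ := toEnd K L M x
  obtain ⟨n, hn, hdisj⟩ : ∃ n, 1 ≤ n ∧ Disjoint (LinearMap.ker (φ ^ n)) (LinearMap.range (φ ^ n)) :=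
    ((Filter.eventually_ge_atTop 1).and φ.eventually_disjoint_ker_pow_range_pow).exists
  let W : LieSubmodule K L M :=
    { toSubmodule := LinearMap.range (φ ^ n)
      lie_mem := by
        rintro y _ ⟨m, rfl⟩
        exact ⟨⁅y, m⁆, LinearMap.congr_fun
          ((commute_toEnd_of_mem_center_right M hxc y).pow_right n).eq.symm m⟩ }
  obtain ⟨u, hu⟩ : IsUnit (toEnd K L W x) := by
    refine (LinearMap.isUnit_iff_ker_eq_bot _).mpr (eq_bot_iff.mpr fun w hw ↦ ?_)
    replace hw : φ w = 0 := congrArg Subtype.val hw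
    have hw_ker : (w : M) ∈ LinearMap.ker (φ ^ n) := by
      obtain ⟨m, rfl⟩ := Nat.exists_eq_add_of_le' hn
      rw [LinearMap.mem_ker, pow_succ, Module.End.mul_apply, hw, map_zero]
    exact (Submodule.mem_bot K).mpr (Subtype.ext (hdisj.le_bot ⟨hw_ker, w.2⟩))
  have hcomm (y : L) : Commute (toEnd K L W y) u := hu ▸ commute_toEnd_of_mem_center_right W hxc y
  have htr := trace_toEnd_mul_eq_zero_of_mem_derivedSeries hxd fun y ↦ (hcomm y).units_inv_right
  rw [← hu, Units.mul_inv, LinearMap.trace_one, Nat.cast_eq_zero] at htr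
  exact ⟨n, LinearMap.range_eq_bot.mp (Submodule.finrank_eq_zero.mp htr)⟩

lemma disjoint_center_derivedSeries_one_of_traceForm_nondegenerate
    (h : (traceForm K L M).Nondegenerate) :
    Disjoint (center K L : Submodule K L) (derivedSeries K L 1 : Submodule K L) := by
  refine Submodule.disjoint_def.mpr fun x hxc hxd ↦ h.1 x fun y ↦ ?_
  have hnil := (commute_toEnd_of_mem_center_left M hxc y).isNilpotent_mul_right
    (isNilpotent_toEnd_of_mem_center_of_mem_derivedSeries hxc hxd)
  rw [traceForm_apply_apply, ← Module.End.mul_eq_comp]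
  exact (LinearMap.isNilpotent_trace_of_isNilpotent hnil).eq_zero

end LieModule

namespace LinearMap.BilinForm

variable {R L : Type*} [CommRing R] [LieRing L] [LieAlgebra R L] {B : LinearMap.BilinForm R L}

lemma orthogonal_derivedSeries_one_eq_center (hB : B.Nondegenerate) (hinv : B.lieInvariant L) :
    B.orthogonal (derivedSeries R L 1) = center R L := by
  ext y
  rw [coe_derivedSeries_one_eq]
  change Submodule.span R _ ≤ LinearMap.ker (B.flip y) ↔ ∀ a : L, ⁅a, y⁆ = 0
  simp only [Submodule.span_le, Set.subset_def, Set.mem_ofPred_eq, forall_exists_index]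
  refine ⟨fun h a ↦ hB.2 _ fun b ↦ ?_, fun h _ a b hab ↦ ?_⟩
  · simpa only [SetLike.mem_coe, LinearMap.mem_ker, flip_apply, hinv a b y, neg_eq_zero]
      using h _ a b rfl
  · rw [← hab, SetLike.mem_coe, LinearMap.mem_ker, flip_apply, hinv a b y, h, map_zero,
      neg_zero]

variable {K : Type*} [Field K] [LieAlgebra K L] [Module.Finite K L] {B : LinearMap.BilinForm K L}

lemma orthogonal_center_eq_derivedSeries_one (hB : B.Nondegenerate) (hrefl : B.IsRefl)
    (hinv : B.lieInvariant L) :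
    B.orthogonal (center K L) = derivedSeries K L 1 := by
  rw [← orthogonal_derivedSeries_one_eq_center hB hinv, orthogonal_orthogonal hB hrefl]

end LinearMap.BilinForm

namespace LieModule

open LinearMap.BilinForm

variable {K L M : Type*} [Field K] [CharZero K] [LieRing L] [LieAlgebra K L] [Module.Finite K L]
  [AddCommGroup M] [Module K M] [LieRingModule L M] [LieModule K L M] [Module.Finite K M]

lemma traceForm_restrict_center_nondegenerate (h : (traceForm K L M).Nondegenerate) :
    ((traceForm K L M).restrict (center K L)).Nondegenerate := by
  have hrefl := (traceForm_isSymm K L M).isRefl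
  rw [restrict_nondegenerate_iff_isCompl_orthogonal hrefl, isCompl_orthogonal_iff_disjoint hrefl,
    orthogonal_center_eq_derivedSeries_one h hrefl (traceForm_lieInvariant K L M)]
  exact disjoint_center_derivedSeries_one_of_traceForm_nondegenerate h

lemma traceForm_restrict_derivedSeries_one_nondegenerate (h : (traceForm K L M).Nondegenerate) :
    ((traceForm K L M).restrict (derivedSeries K L 1)).Nondegenerate := by
  have hrefl := (traceForm_isSymm K L M).isRefl
  rw [restrict_nondegenerate_iff_isCompl_orthogonal hrefl, isCompl_orthogonal_iff_disjoint hrefl,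
    orthogonal_derivedSeries_one_eq_center h (traceForm_lieInvariant K L M)]
  exact (disjoint_center_derivedSeries_one_of_traceForm_nondegenerate h).symm

end LieModule

namespace LieSubalgebra

variable {R L : Type*} [CommRing R] [LieRing L] [LieAlgebra R L] {H : LieSubalgebra R L}

lemma mem_center_iff {x : H} : x ∈ center R H ↔ ∀ y ∈ H, ⁅(x : L), y⁆ = 0 := by
  rw [LieModule.mem_maxTrivSubmodule]
  refine ⟨fun h y hy ↦ ?_, fun h y ↦ Subtype.ext ?_⟩
  · rw [← lie_skew, neg_eq_zero]
    exact congrArg Subtype.val (h ⟨y, hy⟩)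
  · rw [coe_bracket, ← lie_skew, h y y.2, neg_zero, ZeroMemClass.coe_zero]

variable (H) in
lemma span_lie_eq_map_derivedSeries_one :
    Submodule.span R {z | ∃ a ∈ H, ∃ b ∈ H, ⁅a, b⁆ = z} =
      (derivedSeries R H 1 : Submodule R H).map H.incl.toLinearMap := by
  rw [coe_derivedSeries_one_eq, Submodule.map_span]
  congr 1
  ext z
  constructor
  · rintro ⟨a, ha, b, hb, rfl⟩
    exact ⟨⁅⟨a, ha⟩, ⟨b, hb⟩⁆, ⟨_, _, rfl⟩, rfl⟩
  · rintro ⟨_, ⟨a, b, rfl⟩, rfl⟩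
    exact ⟨a, a.2, b, b.2, rfl⟩

end LieSubalgebra

section Graded

variable {K L ι : Type*} [Field K] [LieRing L] [LieAlgebra K L]
  [AddCancelCommMonoid ι] [DecidableEq ι] {g : ι → Submodule K L}

variable (g) in
def gradeZeroSubalgebra (hbr : ∀ i j : ι, ∀ x ∈ g i, ∀ y ∈ g j, ⁅x, y⁆ ∈ g (i + j)) :
    LieSubalgebra K L where
  toSubmodule := g 0
  lie_mem' hx hy := by simpa using hbr 0 0 _ hx _ hy

variable [Module.Finite K L] (hint : DirectSum.IsInternal g)
  (hbr : ∀ i j : ι, ∀ x ∈ g i, ∀ y ∈ g j, ⁅x, y⁆ ∈ g (i + j))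
include hint hbr

lemma killingForm_apply_eq_zero_of_add_ne_zero {i j : ι} (hij : i + j ≠ 0) {x y : L}
    (hx : x ∈ g i) (hy : y ∈ g j) :
    killingForm K L x y = 0 := by
  rw [killingForm_apply_apply]
  refine LinearMap.trace_eq_zero_of_mapsTo_ne hint (i + j + ·) (fun m h ↦ hij ?_)
    fun m z hz ↦ ?_
  · exact add_eq_right.mp h
  · simpa [add_assoc] using hbr i (j + m) x hx _ (hbr j m y hy z hz)

lemma killingForm_apply_eq_zero_of_forall_mem_zero {x : L} (hx : x ∈ g 0)
    (h : ∀ y ∈ g 0, killingForm K L x y = 0) (y : L) :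
    killingForm K L x y = 0 := by
  have hy : y ∈ ⨆ j, g j := by rw [hint.submodule_iSup_eq_top]; exact Submodule.mem_top
  induction hy using Submodule.iSup_induction' with
  | mem j z hz =>
    obtain rfl | hj := eq_or_ne j 0
    · exact h z hz
    · exact killingForm_apply_eq_zero_of_add_ne_zero hint hbr (by simpa using hj) hx hz
  | zero => simp
  | add y z _ _ hy hz => rw [map_add, hy, hz, add_zero]

lemma traceForm_gradeZeroSubalgebra_nondegenerate (hκ : (killingForm K L).Nondegenerate) :
    (LieModule.traceForm K (gradeZeroSubalgebra g hbr) L).Nondegenerate := by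
  refine ((LieModule.traceForm_isSymm _ _ _).isRefl.nondegenerate_iff_separatingLeft).mpr
    fun x hx ↦ Subtype.ext (hκ.1 x ?_)
  exact killingForm_apply_eq_zero_of_forall_mem_zero hint hbr x.2 fun y hy ↦ hx ⟨y, hy⟩

end Graded

theorem killingForm_restrict_center_derived_nondegenerate_general
    {𝕂 : Type*} [Field 𝕂] [CharZero 𝕂]
    {L : Type*} [LieRing L] [LieAlgebra 𝕂 L] [Module.Finite 𝕂 L]
    (hκ : (killingForm 𝕂 L).Nondegenerate)
    (g : ℤ → Submodule 𝕂 L)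
    (hint : DirectSum.IsInternal g)
    (hbr : ∀ i j : ℤ, ∀ x ∈ g i, ∀ y ∈ g j, ⁅x, y⁆ ∈ g (i + j)) :
    (∀ Z : L, Z ∈ g 0 → (∀ B ∈ g 0, ⁅Z, B⁆ = 0) →
        (∀ Z' : L, Z' ∈ g 0 → (∀ B ∈ g 0, ⁅Z', B⁆ = 0) → killingForm 𝕂 L Z Z' = 0) →
        Z = 0) ∧
    (∀ C ∈ Submodule.span 𝕂 {x : L | ∃ a ∈ g 0, ∃ b ∈ g 0, ⁅a, b⁆ = x},
        (∀ C' ∈ Submodule.span 𝕂 {x : L | ∃ a ∈ g 0, ∃ b ∈ g 0, ⁅a, b⁆ = x},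
          killingForm 𝕂 L C C' = 0) → C = 0) := by
  set H := gradeZeroSubalgebra g hbr
  have hH := traceForm_gradeZeroSubalgebra_nondegenerate hint hbr hκ
  have hspan : Submodule.span 𝕂 {x : L | ∃ a ∈ g 0, ∃ b ∈ g 0, ⁅a, b⁆ = x} = _ :=
    H.span_lie_eq_map_derivedSeries_one
  refine ⟨fun Z hZ hZc hZorth ↦ ?_, fun C hC hCorth ↦ ?_⟩
  · have hmem : (⟨Z, hZ⟩ : H) ∈ center 𝕂 H := LieSubalgebra.mem_center_iff.mpr hZc
    have := (LieModule.traceForm_restrict_center_nondegenerate hH).1 ⟨_, hmem⟩ fun w ↦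
      hZorth _ (w : H).2 (LieSubalgebra.mem_center_iff.mp w.2)
    simpa using congrArg Subtype.val (congrArg Subtype.val this)
  · rw [hspan] at hC hCorth
    obtain ⟨c, hc, rfl⟩ := hC
    have := (LieModule.traceForm_restrict_derivedSeries_one_nondegenerate hH).1 ⟨c, hc⟩ fun c' ↦
      hCorth _ (Submodule.mem_map_of_mem c'.2)
    simpa using congrArg Subtype.val (congrArg Subtype.val this)

/-- The restrictions of the Killing form to the center of `g 0` and to the derived subalgebra
of `g 0` are both nondegenerate. -/
theorem killingForm_restrict_center_derived_nondegenerate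
    {𝕂 : Type*} [Field 𝕂] [CharZero 𝕂]
    {L : Type*} [LieRing L] [LieAlgebra 𝕂 L] [Module.Finite 𝕂 L]
    (hκ : (killingForm 𝕂 L).Nondegenerate)
    (k : ℕ) (hk : 1 ≤ k)
    (g : ℤ → Submodule 𝕂 L)
    (hbd : ∀ i : ℤ, (k : ℤ) < |i| → g i = ⊥)
    (hint : DirectSum.IsInternal g)
    (hbr : ∀ i j : ℤ, ∀ x ∈ g i, ∀ y ∈ g j, ⁅x, y⁆ ∈ g (i + j)) :
    (∀ Z : L, Z ∈ g 0 → (∀ B ∈ g 0, ⁅Z, B⁆ = 0) →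
        (∀ Z' : L, Z' ∈ g 0 → (∀ B ∈ g 0, ⁅Z', B⁆ = 0) → killingForm 𝕂 L Z Z' = 0) →
        Z = 0) ∧
    (∀ C ∈ Submodule.span 𝕂 {x : L | ∃ a ∈ g 0, ∃ b ∈ g 0, ⁅a, b⁆ = x},
        (∀ C' ∈ Submodule.span 𝕂 {x : L | ∃ a ∈ g 0, ∃ b ∈ g 0, ⁅a, b⁆ = x},
          killingForm 𝕂 L C C' = 0) → C = 0) :=
  killingForm_restrict_center_derived_nondegenerate_general hκ g hint hbr
end

section
/- For every A ∈ g_0 and every integer i, the traces of the restrictions of ad(A) to the graded pieces satisfy tr(ad(A)|_{g_{-i}}) = − tr(ad(A)|_{g_i}). -/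
/-!
If `i + j ≠ 0`, then for `x ∈ g i`, `y ∈ g j` the endomorphism `ad x ∘ ad y` shifts degrees by
`i + j`, hence is nilpotent since the grading is bounded, so `κ x y = 0`. Nondegeneracy of `κ`
then makes the restriction of `κ` to `g (-i) × g i` a perfect pairing, for which `ad A` is
skew-adjoint by invariance of `κ`; so `ad A` on `g (-i)` is conjugate to minus the transpose of
`ad A` on `g i`.
-/

theorem LinearMap.trace_eq_neg_trace_of_isPerfPair {R M N : Type*} [CommRing R]
    [AddCommGroup M] [Module R M] [AddCommGroup N] [Module R N]
    [Module.Free R N] [Module.Finite R N]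
    (p : M →ₗ[R] N →ₗ[R] R) [p.IsPerfPair] {f : M →ₗ[R] M} {f' : N →ₗ[R] N}
    (h : ∀ x y, p (f x) y = - p x (f' y)) :
    trace R M f = - trace R N f' := by
  have hconj : p.toPerfPair.conj f = - Module.Dual.transpose (R := R) f' := by
    ext φ y
    obtain ⟨x, rfl⟩ := p.toPerfPair.surjective φ
    simp [LinearEquiv.conj_apply, h, Module.Dual.transpose_apply]
  rw [← trace_conj' f p.toPerfPair, hconj, ← trace_transpose' f']
  exact (trace R (Module.Dual R N)).map_neg (Module.Dual.transpose (R := R) f')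

theorem Module.End.isNilpotent_of_shifts_grading {R M : Type*} [Semiring R] [AddCommMonoid M]
    [Module R M] (g : ℤ → Submodule R M) (hsup : iSup g = ⊤) (k : ℕ)
    (hbd : ∀ i : ℤ, (k : ℤ) < |i| → g i = ⊥) {d : ℤ} (hd : d ≠ 0) {φ : Module.End R M}
    (hφ : ∀ m, ∀ z ∈ g m, φ z ∈ g (m + d)) : IsNilpotent φ := by
  have hpow : ∀ n : ℕ, ∀ m, ∀ z ∈ g m, (φ ^ n) z ∈ g (m + n * d) := by
    intro n
    induction n with
    | zero => simp
    | succ n ih =>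
      intro m z hz
      rw [pow_succ', Module.End.mul_apply]
      convert hφ _ _ (ih m z hz) using 2
      push_cast; ring
  -- `2k + 1` shifts by `d ≠ 0` move every degree in `[-k, k]` out of `[-k, k]`.
  have hfar : ∀ m : ℤ, |m| ≤ k → (k : ℤ) < |m + ((2 * k + 1 : ℕ) : ℤ) * d| := by
    intro m hm
    rw [abs_le] at hm
    rw [lt_abs]
    push_cast
    rcases hd.lt_or_gt with hd | hd
    · right; nlinarith
    · left; nlinarith
  refine ⟨2 * k + 1, LinearMap.ker_eq_top.mp (top_le_iff.mp (hsup ▸ iSup_le fun m z hz => ?_))⟩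
  rcases le_or_gt |m| k with hm | hm
  · have := hpow (2 * k + 1) m z hz
    rwa [hbd _ (hfar m hm), Submodule.mem_bot] at this
  · rw [hbd m hm, Submodule.mem_bot] at hz
    simp [hz]

section Grading

variable {𝕂 L : Type*} [Field 𝕂] [LieRing L] [LieAlgebra 𝕂 L]
  (g : ℤ → Submodule 𝕂 L)

theorem killingForm_apply_eq_zero_of_mem_grading_of_add_ne_zero (hsup : iSup g = ⊤) (k : ℕ)
    (hbd : ∀ i : ℤ, (k : ℤ) < |i| → g i = ⊥)
    (hbr : ∀ i j : ℤ, ∀ x ∈ g i, ∀ y ∈ g j, ⁅x, y⁆ ∈ g (i + j))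
    {i j : ℤ} (hij : i + j ≠ 0) {x y : L} (hx : x ∈ g i) (hy : y ∈ g j) :
    killingForm 𝕂 L x y = 0 := by
  have hnil : IsNilpotent (LieAlgebra.ad 𝕂 L x ∘ₗ LieAlgebra.ad 𝕂 L y) :=
    Module.End.isNilpotent_of_shifts_grading g hsup k hbd hij fun m z hz => by
      simpa [add_comm, add_left_comm] using hbr _ _ x hx _ (hbr _ _ y hy _ hz)
  exact (LinearMap.isNilpotent_trace_of_isNilpotent hnil).eq_zero

theorem eq_zero_of_mem_grading_of_killingForm_apply_eq_zero
    (hκ : (killingForm 𝕂 L).Nondegenerate) (hsup : iSup g = ⊤) (k : ℕ)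
    (hbd : ∀ i : ℤ, (k : ℤ) < |i| → g i = ⊥)
    (hbr : ∀ i j : ℤ, ∀ x ∈ g i, ∀ y ∈ g j, ⁅x, y⁆ ∈ g (i + j))
    {i j : ℤ} (hij : i + j = 0) {x : L} (hx : x ∈ g i)
    (h : ∀ y ∈ g j, killingForm 𝕂 L x y = 0) : x = 0 := by
  refine hκ.1 x fun z => LinearMap.mem_ker.mp ?_
  suffices iSup g ≤ LinearMap.ker (killingForm 𝕂 L x) from this (hsup ▸ Submodule.mem_top)
  refine iSup_le fun m y hy => ?_
  rcases eq_or_ne m j with rfl | hm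
  · exact h y hy
  · exact killingForm_apply_eq_zero_of_mem_grading_of_add_ne_zero g hsup k hbd hbr (by omega) hx hy

end Grading

theorem trace_ad_neg_grade_general
    {𝕂 : Type*} [Field 𝕂]
    {L : Type*} [LieRing L] [LieAlgebra 𝕂 L] [Module.Finite 𝕂 L]
    (hκ : (killingForm 𝕂 L).Nondegenerate)
    (k : ℕ)
    (g : ℤ → Submodule 𝕂 L)
    (hbd : ∀ i : ℤ, (k : ℤ) < |i| → g i = ⊥)
    (hint : DirectSum.IsInternal g)
    (hbr : ∀ i j : ℤ, ∀ x ∈ g i, ∀ y ∈ g j, ⁅x, y⁆ ∈ g (i + j)) :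
    ∀ A ∈ g 0, ∀ i : ℤ, ∀ (f : g i →ₗ[𝕂] g i) (f' : g (-i) →ₗ[𝕂] g (-i)),
      (∀ x : g i, (f x : L) = ⁅A, (x : L)⁆) →
      (∀ x : g (-i), (f' x : L) = ⁅A, (x : L)⁆) →
      LinearMap.trace 𝕂 (g (-i)) f' = - LinearMap.trace 𝕂 (g i) f := by
  intro A _ i f f' hf hf'
  have hsup := hint.submodule_iSup_eq_top
  let B := (killingForm 𝕂 L).compl₁₂ (g (-i)).subtype (g i).subtype
  have : B.IsPerfPair := .of_injective
    ((injective_iff_map_eq_zero B).mpr fun y hy => Subtype.ext <|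
      eq_zero_of_mem_grading_of_killingForm_apply_eq_zero g hκ hsup k hbd hbr
        (neg_add_cancel i) y.2
        fun x hx => congr($hy ⟨x, hx⟩))
    ((injective_iff_map_eq_zero B.flip).mpr fun x hx => Subtype.ext <|
      eq_zero_of_mem_grading_of_killingForm_apply_eq_zero g hκ hsup k hbd hbr
        (add_neg_cancel i) x.2
        fun y hy => (LieModule.traceForm_comm 𝕂 L L _ _).trans congr($hx ⟨y, hy⟩))
  refine LinearMap.trace_eq_neg_trace_of_isPerfPair B fun y x => ?_
  simp only [B, LinearMap.compl₁₂_apply, Submodule.subtype_apply, hf, hf']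
  exact LieModule.traceForm_apply_lie_apply' 𝕂 L L A y x

/-- For `A ∈ g 0` the trace of `ad A` on `g (-i)` is the negative of its trace on `g i`. -/
theorem trace_ad_neg_grade
    {𝕂 : Type*} [Field 𝕂] [CharZero 𝕂]
    {L : Type*} [LieRing L] [LieAlgebra 𝕂 L] [Module.Finite 𝕂 L]
    (hκ : (killingForm 𝕂 L).Nondegenerate)
    (k : ℕ) (hk : 1 ≤ k)
    (g : ℤ → Submodule 𝕂 L)
    (hbd : ∀ i : ℤ, (k : ℤ) < |i| → g i = ⊥)
    (hint : DirectSum.IsInternal g)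
    (hbr : ∀ i j : ℤ, ∀ x ∈ g i, ∀ y ∈ g j, ⁅x, y⁆ ∈ g (i + j)) :
    ∀ A ∈ g 0, ∀ i : ℤ, ∀ (f : g i →ₗ[𝕂] g i) (f' : g (-i) →ₗ[𝕂] g (-i)),
      (∀ x : g i, (f x : L) = ⁅A, (x : L)⁆) →
      (∀ x : g (-i), (f' x : L) = ⁅A, (x : L)⁆) →
      LinearMap.trace 𝕂 (g (-i)) f' = - LinearMap.trace 𝕂 (g i) f :=
  trace_ad_neg_grade_general hκ k g hbd hint hbr
end

section
/- Assume that g_- is generated by g_{-1} (the Lie subalgebra of g generated by g_{-1} contains g_i for every i < 0) and that no nonzero Lie ideal of g is contained in g_0. Then g_0 acts faithfully on g_{-1}: if A ∈ g_0 satisfies ⁅A, X⁆ = 0 for all X ∈ g_{-1}, then A = 0. -/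
/-!
An element `A ∈ g 0` killing `g (-1)` kills its Lie span, hence all of `g_-`. For `j > 0` and
`x ∈ g j`, invariance of the Killing form gives `κ ⁅A, x⁆ z = -κ x ⁅A, z⁆ = 0` for `z ∈ g (-j)`,
while `g j` is Killing-orthogonal to every other `g m` because `ad u ∘ ad v` shifts degrees; so
`⁅A, x⁆ = 0` by nondegeneracy. Thus `A` lies in the Lie ideal of degree-zero elements
centralizing every `g j` with `j ≠ 0`, which is contained in `g 0` and therefore vanishes.
-/

namespace LieAlgebra

theorem lie_eq_zero_of_mem_lieSpan {R L : Type*} [CommRing R] [LieRing L] [LieAlgebra R L]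
    {s : Set L} {A x : L} (hA : ∀ y ∈ s, ⁅A, y⁆ = 0) (hx : x ∈ LieSubalgebra.lieSpan R L s) :
    ⁅A, x⁆ = 0 := by
  simpa using LieDerivation.eqOn_lieSpan (D1 := LieDerivation.ad R L A) (D2 := 0)
    (fun y hy => by simpa using hA y hy) hx

section Centralizer

variable {R L ι : Type*} [CommRing R] [LieRing L] [LieAlgebra R L] [AddZeroClass ι]
  {g : ι → Submodule R L}

def degreeZeroCentralizer (hg : ⨆ i, g i = ⊤)
    (hbr : ∀ i j, ∀ x ∈ g i, ∀ y ∈ g j, ⁅x, y⁆ ∈ g (i + j)) : LieIdeal R L where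
  carrier := {x | x ∈ g 0 ∧ ∀ j ≠ 0, ∀ y ∈ g j, ⁅x, y⁆ = 0}
  add_mem' := by
    rintro a b ⟨ha0, ha⟩ ⟨hb0, hb⟩
    exact ⟨add_mem ha0 hb0, fun j hj y hy => by rw [add_lie, ha j hj y hy, hb j hj y hy, add_zero]⟩
  zero_mem' := ⟨zero_mem _, fun _ _ y _ => zero_lie y⟩
  smul_mem' := by
    rintro c a ⟨ha0, ha⟩
    exact ⟨Submodule.smul_mem _ c ha0, fun j hj y hy => by rw [smul_lie, ha j hj y hy, smul_zero]⟩
  lie_mem := by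
    rintro x m ⟨hm0, hm⟩
    have hx : x ∈ ⨆ i, g i := hg ▸ Submodule.mem_top
    induction hx using Submodule.iSup_induction' with
    | mem i z hz =>
      obtain rfl | hi := eq_or_ne i 0
      · refine ⟨zero_add (0 : ι) ▸ hbr 0 0 z hz m hm0, fun j hj y hy => ?_⟩
        have hzy : ⁅z, y⁆ ∈ g j := zero_add j ▸ hbr 0 j z hz y hy
        rw [lie_lie, hm j hj y hy, lie_zero, hm j hj _ hzy, sub_zero]
      · rw [← lie_skew, hm i hi z hz, neg_zero]
        exact ⟨zero_mem _, fun _ _ y _ => zero_lie y⟩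
    | zero =>
      rw [zero_lie]
      exact ⟨zero_mem _, fun _ _ y _ => zero_lie y⟩
    | add u v _ _ hu hv =>
      rw [add_lie]
      exact ⟨add_mem hu.1 hv.1,
        fun j hj y hy => by rw [add_lie, hu.2 j hj y hy, hv.2 j hj y hy, add_zero]⟩

end Centralizer

section KillingForm

variable {K L ι : Type*} [Field K] [LieRing L] [LieAlgebra K L] [Module.Finite K L]
  [AddCommGroup ι] [DecidableEq ι] {g : ι → Submodule K L}

theorem killingForm_apply_eq_zero_of_mem_of_add_ne_zero (hg : DirectSum.IsInternal g)
    (hbr : ∀ i j, ∀ x ∈ g i, ∀ y ∈ g j, ⁅x, y⁆ ∈ g (i + j)) {i j : ι} {x y : L}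
    (hx : x ∈ g i) (hy : y ∈ g j) (hij : i + j ≠ 0) :
    killingForm K L x y = 0 := by
  rw [LieModule.traceForm_apply_apply]
  refine LinearMap.trace_eq_zero_of_mapsTo_ne hg (fun l => i + (j + l))
    (fun l => by simpa only [← add_assoc] using add_ne_right.mpr hij) (fun l w hw => ?_)
  simpa [LieModule.toEnd_apply_apply] using hbr i _ x hx _ (hbr j l y hy w hw)

theorem eq_zero_of_forall_mem_neg_killingForm_apply_eq_zero
    (hκ : (killingForm K L).Nondegenerate) (hg : DirectSum.IsInternal g)
    (hbr : ∀ i j, ∀ x ∈ g i, ∀ y ∈ g j, ⁅x, y⁆ ∈ g (i + j)) {i : ι} {x : L} (hx : x ∈ g i)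
    (hx' : ∀ y ∈ g (-i), killingForm K L x y = 0) :
    x = 0 := by
  refine hκ.1 x fun y => ?_
  have hy : y ∈ ⨆ j, g j := hg.submodule_iSup_eq_top ▸ Submodule.mem_top
  induction hy using Submodule.iSup_induction' with
  | mem j y hy =>
    obtain rfl | hij := eq_or_ne j (-i)
    · exact hx' y hy
    · exact killingForm_apply_eq_zero_of_mem_of_add_ne_zero hg hbr hx hy
        (fun h => hij (eq_neg_of_add_eq_zero_right h))
  | zero => simp
  | add => simp_all

theorem lie_eq_zero_of_forall_mem_neg_lie_eq_zero
    (hκ : (killingForm K L).Nondegenerate) (hg : DirectSum.IsInternal g)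
    (hbr : ∀ i j, ∀ x ∈ g i, ∀ y ∈ g j, ⁅x, y⁆ ∈ g (i + j)) {A : L} (hA : A ∈ g 0) {j : ι}
    (hAj : ∀ z ∈ g (-j), ⁅A, z⁆ = 0) {x : L} (hx : x ∈ g j) :
    ⁅A, x⁆ = 0 := by
  refine eq_zero_of_forall_mem_neg_killingForm_apply_eq_zero hκ hg hbr
    (zero_add j ▸ hbr 0 j A hA x hx) fun z hz => ?_
  rw [LieModule.traceForm_apply_lie_apply', hAj z hz, map_zero, neg_zero]

end KillingForm

end LieAlgebra

theorem g0_acts_faithfully_on_g_neg_one_general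
    {𝕂 : Type*} [Field 𝕂]
    {L : Type*} [LieRing L] [LieAlgebra 𝕂 L] [Module.Finite 𝕂 L]
    (hκ : (killingForm 𝕂 L).Nondegenerate)
    (g : ℤ → Submodule 𝕂 L)
    (hint : DirectSum.IsInternal g)
    (hbr : ∀ i j : ℤ, ∀ x ∈ g i, ∀ y ∈ g j, ⁅x, y⁆ ∈ g (i + j))
    (hgen : ∀ i : ℤ, i < 0 → ∀ x ∈ g i, x ∈ LieSubalgebra.lieSpan 𝕂 L (g (-1) : Set L))
    (heff : ∀ I : LieIdeal 𝕂 L, (∀ x ∈ I, x ∈ g 0) → I = ⊥) :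
    ∀ A ∈ g 0, (∀ X ∈ g (-1), ⁅A, X⁆ = 0) → A = 0 := by
  intro A hA hAX
  have hneg : ∀ i < 0, ∀ x ∈ g i, ⁅A, x⁆ = 0 := fun i hi x hx =>
    LieAlgebra.lie_eq_zero_of_mem_lieSpan hAX (hgen i hi x hx)
  have hne : ∀ j ≠ 0, ∀ x ∈ g j, ⁅A, x⁆ = 0 := by
    intro j hj x hx
    obtain hj | hj := hj.lt_or_gt
    · exact hneg j hj x hx
    · exact LieAlgebra.lie_eq_zero_of_forall_mem_neg_lie_eq_zero hκ hint hbr hA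
        (hneg (-j) (by omega)) hx
  let I := LieAlgebra.degreeZeroCentralizer hint.submodule_iSup_eq_top hbr
  have hA' : A ∈ I := ⟨hA, hne⟩
  rwa [heff I fun x hx => hx.1, LieSubmodule.mem_bot] at hA'

/-- Under the effectivity assumptions, `g 0` acts faithfully on `g (-1)`. -/
theorem g0_acts_faithfully_on_g_neg_one
    {𝕂 : Type*} [Field 𝕂] [CharZero 𝕂]
    {L : Type*} [LieRing L] [LieAlgebra 𝕂 L] [Module.Finite 𝕂 L]
    (hκ : (killingForm 𝕂 L).Nondegenerate)
    (k : ℕ) (hk : 1 ≤ k)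
    (g : ℤ → Submodule 𝕂 L)
    (hbd : ∀ i : ℤ, (k : ℤ) < |i| → g i = ⊥)
    (hint : DirectSum.IsInternal g)
    (hbr : ∀ i j : ℤ, ∀ x ∈ g i, ∀ y ∈ g j, ⁅x, y⁆ ∈ g (i + j))
    (hgen : ∀ i : ℤ, i < 0 → ∀ x ∈ g i, x ∈ LieSubalgebra.lieSpan 𝕂 L (g (-1) : Set L))
    (heff : ∀ I : LieIdeal 𝕂 L, (∀ x ∈ I, x ∈ g 0) → I = ⊥) :
    ∀ A ∈ g 0, (∀ X ∈ g (-1), ⁅A, X⁆ = 0) → A = 0 :=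
  g0_acts_faithfully_on_g_neg_one_general hκ g hint hbr hgen heff
end
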